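/- arXiv:2001.03858 — 5 statements merged into one kernel-verified Lean document; each statement's English description precedes it below -/
import Mathlib

section
/- Let A be an associative algebra of finite or countable dimension over ℂ with identity, I a two-sided ideal of A, and √I the intersection of all primitive ideals of A containing I. Then for z ∈ A, z ∈ √I if and only if for every a ∈ A there exists k ∈ ℤ_{>0} such that (az)^k ∈ I. -/
/-!
If `z` kills a simple module `M` but `z • m ≠ 0`, simplicity gives `a` with `a • z • m = m`,
so no power of `a * z` kills `m`; hence no power lies in `I`.

Conversely, the hypothesis says that `z` lies in every maximal left ideal containing `I`, so
`x = a * z` maps into the Jacobson radical of `B = A ⧸ I`. There `x - c` has a left inverse for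
every scalar `c ≠ 0`. If `x` were transcendental, these uncountably many left inverses would be
linearly independent (clear denominators by `∏ (x - cᵢ)`) in the countable-dimensional `B`; so
`x` is algebraic, `xⁿ q(x) = 0` with `q(0) ≠ 0`, and `q(x)` is left invertible as a unit plus
an element of the radical, whence `xⁿ = 0` (Amitsur's trick).
-/

open Polynomial

universe u

theorem exists_mul_aeval_eq_one_of_mem_jacobson {K B : Type*} [CommRing K] [Ring B]
    [Algebra K B] {x : B} (hx : x ∈ Ring.jacobson B) {q : K[X]} (hq : IsUnit (q.coeff 0)) :
    ∃ w, w * aeval x q = 1 := by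
  obtain ⟨c, hc⟩ := hq.map (algebraMap K B)
  rw [← Ideal.jacobson_bot] at hx
  obtain ⟨w, hw⟩ := Ideal.mem_jacobson_iff.mp hx (↑c⁻¹ * aeval x q.divX)
  rw [Ideal.mem_bot, sub_eq_zero] at hw
  have hq : aeval x q = c * (↑c⁻¹ * aeval x q.divX * x + 1) := by
    conv_lhs => rw [← q.divX_mul_X_add]
    rw [mul_add, ← mul_assoc, ← mul_assoc, Units.mul_inv, one_mul, mul_one, hc]
    simp
  refine ⟨w * ↑c⁻¹, ?_⟩
  rw [hq, mul_assoc, ← mul_assoc _ (c : B), Units.inv_mul, one_mul, mul_add, mul_one,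
    ← mul_assoc, hw]

theorem Transcendental.linearIndependent_of_mul_sub_eq_one {K B ι : Type*} [CommRing K]
    [IsDomain K] [Ring B] [Algebra K B] {x : B} (H : Transcendental K x) {a : ι → K}
    (ha : Function.Injective a) {u : ι → B} (hu : ∀ i, u i * (x - algebraMap K B (a i)) = 1) :
    LinearIndependent K u := by
  classical
  refine linearIndependent_iff'.2 fun s g hg i hi => ?_
  let p : K[X] := ∑ j ∈ s, C (g j) * ∏ k ∈ s.erase j, (X - C (a k))
  have hp : Polynomial.aeval x p = 0 := by
    have hclear := congr($hg * Polynomial.aeval x (∏ k ∈ s, (X - C (a k))))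
    rw [zero_mul, Finset.sum_mul] at hclear
    rw [← hclear, map_sum]
    refine Finset.sum_congr rfl fun j hj => ?_
    rw [← Finset.mul_prod_erase s _ hj, smul_mul_assoc, map_mul, map_mul, ← mul_assoc, map_sub,
      aeval_X, aeval_C, aeval_C, hu, one_mul, Algebra.smul_def]
  have hpi : p.eval (a i) = g i * ∏ k ∈ s.erase i, (a i - a k) := by
    rw [eval_finsetSum, Finset.sum_eq_single_of_mem i hi]
    · simp [eval_prod]
    · intro j _ hji
      simp only [eval_mul, eval_C, eval_prod, eval_sub, eval_X]
      rw [Finset.prod_eq_zero (Finset.mem_erase.mpr ⟨hji.symm, hi⟩) (sub_self _), mul_zero]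
  have hprod : ∏ k ∈ s.erase i, (a i - a k) ≠ 0 :=
    Finset.prod_ne_zero_iff.mpr fun k hk =>
      sub_ne_zero.mpr (ha.ne (Finset.ne_of_mem_erase hk).symm)
  have hp0 : p = 0 := by_contra fun hne => H ⟨p, hne, hp⟩
  rw [hp0, eval_zero] at hpi
  exact (mul_eq_zero.mp hpi.symm).resolve_right hprod

theorem isNilpotent_of_mem_jacobson_of_isAlgebraic {K B : Type*} [Field K] [Ring B]
    [Algebra K B] {x : B} (hx : x ∈ Ring.jacobson B) (halg : IsAlgebraic K x) :
    IsNilpotent x := by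
  obtain ⟨p, hp0, hpx⟩ := halg
  obtain ⟨q, hpq, hq⟩ := p.exists_eq_pow_rootMultiplicity_mul_and_not_dvd hp0 0
  rw [map_zero, sub_zero] at hpq hq
  have hq0 : IsUnit (q.coeff 0) := isUnit_iff_ne_zero.mpr fun h => hq (X_dvd_iff.mpr h)
  obtain ⟨w, hw⟩ := exists_mul_aeval_eq_one_of_mem_jacobson hx hq0
  set n := p.rootMultiplicity 0
  refine ⟨n, ?_⟩
  calc x ^ n = w * aeval x q * x ^ n := by rw [hw, one_mul]
    _ = w * aeval x p := by rw [hpq, mul_comm, map_mul, map_pow, aeval_X, mul_assoc]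
    _ = 0 := by rw [hpx, mul_zero]

theorem isNilpotent_of_mem_jacobson_of_rank_le_aleph0 {K B : Type*} [Field K] [Uncountable K]
    [Ring B] [Algebra K B] (hB : Module.rank K B ≤ Cardinal.aleph0) {x : B}
    (hx : x ∈ Ring.jacobson B) : IsNilpotent x := by
  refine isNilpotent_of_mem_jacobson_of_isAlgebraic (K := K) hx ?_
  by_contra (H : Transcendental K x)
  have hinv (c : {c : K // c ≠ 0}) : ∃ u, u * aeval x (X - C (c : K)) = 1 :=
    exists_mul_aeval_eq_one_of_mem_jacobson hx (by simpa using c.2)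
  choose u hu using hinv
  have hli := H.linearIndependent_of_mul_sub_eq_one Subtype.val_injective (u := u)
    fun c => by simpa using hu c
  have hcount : Set.Countable ({0}ᶜ : Set K) := Cardinal.mk_le_aleph0_iff.mp <|
    Cardinal.lift_le_aleph0.mp <| hli.cardinal_lift_le_rank.trans <| Cardinal.lift_le_aleph0.mpr hB
  refine not_countable (α := K) (Set.countable_univ_iff.mp ?_)
  rw [← Set.compl_union_self {0}]
  exact hcount.union (Set.countable_singleton 0)

theorem IsSimpleModule.mem_annihilator_of_forall_exists_pow_mem {A M : Type*} [Ring A]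
    [AddCommGroup M] [Module A M] [IsSimpleModule A M] {z : A}
    (hz : ∀ a : A, ∃ k : ℕ, (a * z) ^ k ∈ Module.annihilator A M) :
    z ∈ Module.annihilator A M := by
  refine Module.mem_annihilator.mpr fun m => by_contra fun hzm => ?_
  obtain ⟨a, ha⟩ := Submodule.mem_span_singleton.mp
    ((IsSimpleModule.span_singleton_eq_top A hzm).ge (Submodule.mem_top (x := m)))
  have hpow (k : ℕ) : (a * z) ^ k • m = m := by
    induction k with
    | zero => rw [pow_zero, one_smul]
    | succ k ih => rw [pow_succ, mul_smul, mul_smul, ha, ih]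
  obtain ⟨k, hk⟩ := hz a
  exact hzm (by rw [← hpow k, Module.mem_annihilator.mp hk, smul_zero])

theorem Ideal.mem_jacobson_of_forall_isSimpleModule {A : Type u} [Ring A] {I : Ideal A}
    [I.IsTwoSided] {z : A}
    (h : ∀ (M : Type u) [AddCommGroup M] [Module A M], IsSimpleModule A M →
      I ≤ Module.annihilator A M → z ∈ Module.annihilator A M) :
    z ∈ I.jacobson := by
  refine Ideal.mem_sInf.mpr fun J ⟨hIJ, hJ⟩ => ?_
  have hann := h (A ⧸ J) (isSimpleModule_iff_isCoatom.mpr (Ideal.isMaximal_def.mp hJ))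
    fun x hx => by
      rw [Submodule.annihilator_quotient, Submodule.mem_colon]
      exact fun a _ => hIJ (I.mul_mem_right a hx)
  rw [Submodule.annihilator_quotient, Submodule.mem_colon] at hann
  simpa using hann 1 trivial

theorem Ideal.Quotient.mk_mem_ringJacobson_iff {A : Type*} [Ring A] {I : Ideal A}
    [I.IsTwoSided] {z : A} :
    Ideal.Quotient.mk I z ∈ Ring.jacobson (A ⧸ I) ↔ z ∈ I.jacobson := by
  rw [← Ideal.jacobson_bot, ← Ideal.mem_comap,
    Ideal.comap_jacobson_of_surjective Ideal.Quotient.mk_surjective,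
    ← RingHom.ker_eq_comap_bot, Ideal.mk_ker]

/-- Let `A` be an associative unital ℂ-algebra of finite or countable dimension,
`I` a two-sided ideal of `A`.  An element `z` lies in `√I`, the intersection of all
primitive ideals of `A` containing `I` (equivalently, `z` annihilates every simple
left `A`-module annihilated by `I`), if and only if for every `a ∈ A` there exists
`k ∈ ℤ_{>0}` with `(a*z)^k ∈ I`. -/
theorem mem_jacobson_radical_iff_pow
    {A : Type} [Ring A] [Algebra ℂ A]
    (hdim : Module.rank ℂ A ≤ Cardinal.aleph0)
    (I : TwoSidedIdeal A) (z : A) :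
    (∀ (M : Type) (_ : AddCommGroup M) (_ : Module A M),
        IsSimpleModule A M → (∀ x ∈ I, ∀ m : M, x • m = 0) → ∀ m : M, z • m = 0) ↔
    (∀ a : A, ∃ k : ℕ, 0 < k ∧ (a * z) ^ k ∈ I) := by
  constructor
  · intro h a
    have hz : z ∈ I.asIdeal.jacobson := Ideal.mem_jacobson_of_forall_isSimpleModule
      fun M _ _ hM hI => Module.mem_annihilator.mpr <|
        h M _ _ hM fun x hx => Module.mem_annihilator.mp (hI (TwoSidedIdeal.mem_asIdeal.mpr hx))
    have hrank : Module.rank ℂ (A ⧸ I.asIdeal) ≤ Cardinal.aleph0 :=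
      (LinearMap.rank_le_of_surjective (Ideal.Quotient.mkₐ ℂ I.asIdeal).toLinearMap
        Ideal.Quotient.mk_surjective).trans hdim
    have : Uncountable ℂ := Complex.ofReal_injective.uncountable
    obtain ⟨n, hn⟩ := isNilpotent_of_mem_jacobson_of_rank_le_aleph0 hrank
      (Ideal.Quotient.mk_mem_ringJacobson_iff.mpr (I.asIdeal.jacobson.mul_mem_left a hz))
    refine ⟨n + 1, n.succ_pos, ?_⟩
    rw [← TwoSidedIdeal.mem_asIdeal, ← Ideal.Quotient.eq_zero_iff_mem, map_pow, pow_succ, hn,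
      zero_mul]
  · intro h M _ _ _ hI
    refine Module.mem_annihilator.mp <|
      IsSimpleModule.mem_annihilator_of_forall_exists_pow_mem fun a => ?_
    obtain ⟨k, -, hk⟩ := h a
    exact ⟨k, Module.mem_annihilator.mpr (hI _ hk)⟩
end

section
/- Let λ, μ be admissible tuples with #μ − #λ = 1 and μ > λ, and let k ∈ ℤ. Then R(μ,k) > R(λ,k), where R(ν,k) is the tuple obtained from ν by replacing with k the entry at the rightmost admissible insertion position (i.e., replacing ν_{i+1} by k where i+1 is maximal with k ≥ ν_{i+1}), and R(ν,k) = ν if k < ν_{#ν}. -/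
/-- An admissible tuple: weakly decreasing with nonnegative integer entries. -/
def Adm {n : ℕ} (l : Fin n → ℤ) : Prop :=
  (∀ i j : Fin n, i ≤ j → l j ≤ l i) ∧ ∀ i, 0 ≤ l i

/-- One-step Gelfand–Tsetlin branching (sp-rule): `μ > λ`, witnessed by an
interlacing tuple `ν` with
`μ₁ ≥ ν₁ ≥ μ₂ ≥ ν₂ ≥ … ≥ μ_{n+1} ≥ ν_{n+1} ≥ 0` and
`ν₁ ≥ λ₁ ≥ ν₂ ≥ … ≥ ν_n ≥ λ_n ≥ ν_{n+1} ≥ 0`. -/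
def Step {n : ℕ} (μ : Fin (n + 1) → ℤ) (l : Fin n → ℤ) : Prop :=
  ∃ ν : Fin (n + 1) → ℤ,
    (∀ i, 0 ≤ ν i) ∧
    (∀ i : Fin (n + 1), ν i ≤ μ i) ∧
    (∀ i : Fin n, μ i.succ ≤ ν i.castSucc) ∧
    (∀ i : Fin n, l i ≤ ν i.castSucc) ∧
    (∀ i : Fin n, ν i.succ ≤ l i)

/-- `Chain μ λ` : there is a chain of admissible tuples from `μ` down to `λ`,
each consecutive pair related by a one-step branching (`μ ≻ λ`). -/
inductive Chain : ∀ {m n : ℕ}, (Fin m → ℤ) → (Fin n → ℤ) → Prop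
  | refl {n} (l : Fin n → ℤ) : Chain l l
  | step {m n} {μ : Fin (m + 1) → ℤ} {l : Fin m → ℤ} {k : Fin n → ℤ} :
      Adm μ → Adm l → Step μ l → Chain l k → Chain μ k
open scoped Classical in
/-- `Rins ν k` replaces with `k` the entry of `ν` at the (unique) insertion
position coming from the `R`-operation: the first index `j` with `ν j ≤ k`
(so that the prefix `ν₁,…,ν_i` with `ν_i > k` is kept).  If no such index
exists (i.e. `k < ν_m`), then `Rins ν k = ν`. -/
noncomputable def Rins {m : ℕ} (ν : Fin m → ℤ) (k : ℤ) : Fin m → ℤ :=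
  fun j => if ν j ≤ k ∧ ∀ i : Fin m, i < j → k < ν i then k else ν j

open scoped Classical in
/-- `Lins ν k` replaces with `k` the entry of `ν` at the insertion position of
the `L`-operation: the last index `j` with `k ≤ ν j`.  If no such index exists
(i.e. `k > ν₁`), then `Lins ν k = ν`. -/
noncomputable def Lins {m : ℕ} (ν : Fin m → ℤ) (k : ℤ) : Fin m → ℤ :=
  fun j => if k ≤ ν j ∧ ∀ i : Fin m, j < i → ν i < k then k else ν j

/-!
`Rins ν k` overwrites with `k` the first entry of `ν` that is `≤ k`, so it never decreases an
entry. Each interlacing inequality `y q ≤ x p` of a branching step comes with inequalities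
`y j ≤ x i` matching every `i < p` with some `j < q`. Hence if the insertion point of `x` lies
before `p`, that of `y` lies before `q`, and the inequality survives the replacement; so
`Rins ν k` interlaces `Rins μ k` and `Rins lam k` whenever `ν` interlaces `μ` and `lam`.
-/

theorem le_Rins_apply {m : ℕ} (ν : Fin m → ℤ) (k : ℤ) (j : Fin m) : ν j ≤ Rins ν k j := by
  unfold Rins
  split_ifs with h
  exacts [h.1, le_rfl]

theorem Rins_apply_le_Rins_apply {a b : ℕ} {x : Fin a → ℤ} {y : Fin b → ℤ} {p : Fin a}
    {q : Fin b} (k : ℤ) (hle : y q ≤ x p) (hprefix : ∀ i < p, ∃ j < q, y j ≤ x i) :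
    Rins y k q ≤ Rins x k p := by
  unfold Rins
  split_ifs with hy hx hx
  · exact le_rfl
  · by_contra! hxk
    obtain ⟨i, hip, hik⟩ : ∃ i < p, x i ≤ k := by
      by_contra! hall
      exact hx ⟨hxk.le, hall⟩
    obtain ⟨j, hjq, hji⟩ := hprefix i hip
    exact (hy.2 j hjq).not_ge (hji.trans hik)
  · exact hle.trans hx.1
  · exact hle

theorem Rins_step_general {n : ℕ} (lam : Fin n → ℤ) (μ : Fin (n + 1) → ℤ)
    (h : Step μ lam) (k : ℤ) :
    Step (Rins μ k) (Rins lam k) := by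
  obtain ⟨ν, hν_nonneg, hνμ, hμν, hlν, hνl⟩ := h
  refine ⟨Rins ν k, fun i => (hν_nonneg i).trans (le_Rins_apply ν k i), fun i => ?_,
    fun i => ?_, fun i => ?_, fun i => ?_⟩
  · exact Rins_apply_le_Rins_apply k (hνμ i) fun j hj => ⟨j, hj, hνμ j⟩
  · refine Rins_apply_le_Rins_apply k (hμν i) fun j hj => ?_
    obtain ⟨j, rfl⟩ := Fin.exists_castSucc_eq.mpr (Fin.ne_last_of_lt hj)
    exact ⟨j.succ, Fin.succ_lt_succ_iff.mpr (Fin.castSucc_lt_castSucc_iff.mp hj), hμν j⟩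
  · refine Rins_apply_le_Rins_apply k (hlν i) fun j hj => ?_
    obtain ⟨j, rfl⟩ := Fin.exists_castSucc_eq.mpr (Fin.ne_last_of_lt hj)
    exact ⟨j, Fin.castSucc_lt_castSucc_iff.mp hj, hlν j⟩
  · exact Rins_apply_le_Rins_apply k (hνl i) fun j hj =>
      ⟨j.succ, Fin.succ_lt_succ_iff.mpr hj, hνl j⟩

/-- If `μ > λ` is a one-step branching of admissible tuples and `k ∈ ℤ`, then
`R(μ,k) > R(λ,k)`. -/
theorem Rins_step {n : ℕ} (lam : Fin n → ℤ) (μ : Fin (n + 1) → ℤ)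
    (hl : Adm lam) (hμ : Adm μ) (h : Step μ lam) (k : ℤ) :
    Step (Rins μ k) (Rins lam k) :=
  Rins_step_general lam μ h k
end

section
/- Let w be a permutation of a finite totally ordered set and let l be the length of the longest strictly decreasing subsequence of the sequence (w(x))_{x}. If k is the number of positions i > 0 with w(i) > 0 in the signed-permutation setting (w(−i) = −w(i) on indices {−n,…,−1,1,…,n}), then l ≤ 2n − k, since a decreasing subsequence cannot contain both w(i) and w(−i) when w(i) < 0 < i. -/
/-!
Fibre the positions of the subsequence over `|x t| ∈ {1, …, n}`. Each fibre has at most two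
elements, `-i` and `i`. If `w i > 0`, it has at most one: `-i` would come before `i`
while `w (-i) = -w i < w i`, against the decrease of `w ∘ x`. Summing over the fibres gives
`l + k ≤ 2n`.
-/

open Finset

theorem card_add_card_filter_le_two_mul {α β : Type*} [DecidableEq β] {s : Finset α}
    {t : Finset β} {f : α → β} {p : β → Prop} [DecidablePred p]
    (hf : ∀ a ∈ s, f a ∈ t) (h2 : ∀ b ∈ t, #{a ∈ s | f a = b} ≤ 2)
    (h1 : ∀ b ∈ t, p b → #{a ∈ s | f a = b} ≤ 1) :
    #s + #{b ∈ t | p b} ≤ 2 * #t := by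
  rw [card_eq_sum_card_fiberwise hf, card_filter, ← sum_add_distrib, mul_comm,
    ← smul_eq_mul, ← sum_const]
  refine sum_le_sum fun b hb => ?_
  split_ifs with hp
  · exact Nat.add_le_add_right (h1 b hb hp) 1
  · simpa using h2 b hb

section SignedSequence

variable {ι α β : Type*} [Fintype ι] [AddCommGroup α] [LinearOrder α]

theorem card_filter_abs_eq_le_two {x : ι → α} (hx : Function.Injective x) (i : α) :
    #{t | |x t| = i} ≤ 2 := by
  calc #{t | |x t| = i} ≤ #({i, -i} : Finset α) := by
        refine card_le_card_of_injOn x (fun t ht => ?_) hx.injOn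
        have ht : |x t| = i := (mem_filter.mp ht).2
        rcases abs_choice (x t) with h | h <;> simp [← ht, h]
    _ ≤ 2 := card_le_two

variable [LinearOrder ι] [IsOrderedAddMonoid α]
  [AddCommGroup β] [LinearOrder β] [IsOrderedAddMonoid β]

theorem card_filter_abs_eq_le_one {x : ι → α} {w : α → β} (hodd : ∀ j, w (-j) = -w j)
    (hmono : StrictMono x) (hdec : StrictAnti (w ∘ x)) {i : α} (hw : 0 < w i) :
    #{t | |x t| = i} ≤ 1 := by
  have ordered_pair_absurd : ∀ a b, a < b → |x a| = i → |x b| = i → False := by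
    intro a b hab ha hb
    have hlt : x a < x b := hmono hab
    obtain ⟨hxa, hxb⟩ : x a = -i ∧ x b = i := by
      rcases abs_choice (x a) with h | h <;> rcases abs_choice (x b) with h' | h' <;>
        grind
    have := hdec hab
    simp only [Function.comp_apply, hxa, hxb, hodd] at this
    grind
  refine card_le_one.mpr fun a ha b hb => ?_
  rw [mem_filter] at ha hb
  rcases lt_trichotomy a b with hab | hab | hab
  · exact (ordered_pair_absurd a b hab ha.2 hb.2).elim
  · exact hab
  · exact (ordered_pair_absurd b a hab hb.2 ha.2).elim

end SignedSequence

theorem decreasing_subsequence_bound_general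
    (n : ℕ) (w : ℤ → ℤ)
    (hodd : ∀ j, w (-j) = - w j)
    (l : ℕ) (x : Fin l → ℤ)
    (hx : ∀ t, x t ≠ 0 ∧ |x t| ≤ (n : ℤ))
    (hmono : StrictMono x)
    (hdec : ∀ s t : Fin l, s < t → w (x t) < w (x s)) :
    l ≤ 2 * n - ((Finset.Icc (1 : ℤ) (n : ℤ)).filter fun i => 0 < w i).card := by
  have hbound := card_add_card_filter_le_two_mul (s := univ) (t := Icc 1 (n : ℤ))
    (f := fun t => |x t|) (p := fun i => 0 < w i)
    (fun t _ => mem_Icc.mpr ⟨Int.one_le_abs (hx t).1, (hx t).2⟩)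
    (fun i _ => card_filter_abs_eq_le_two hmono.injective i)
    (fun _ _ hw => card_filter_abs_eq_le_one hodd hmono hdec hw)
  simp only [card_univ, Fintype.card_fin, Int.card_Icc, add_sub_cancel_right,
    Int.toNat_natCast] at hbound
  omega

/-- For a signed permutation `w` of `{−n,…,−1,1,…,n}` (so `w(−i) = −w(i)`),
let `k = #{i > 0 : w(i) > 0}`.  Then every strictly decreasing subsequence of the
sequence `(w(−n), …, w(−1), w(1), …, w(n))` has length at most `2n − k`. -/
theorem decreasing_subsequence_bound
    (n : ℕ) (w : ℤ → ℤ)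
    (hodd : ∀ j, w (-j) = - w j)
    (hbij : Set.BijOn w {j : ℤ | j ≠ 0 ∧ |j| ≤ (n : ℤ)} {j : ℤ | j ≠ 0 ∧ |j| ≤ (n : ℤ)})
    (l : ℕ) (x : Fin l → ℤ)
    (hx : ∀ t, x t ≠ 0 ∧ |x t| ≤ (n : ℤ))
    (hmono : StrictMono x)
    (hdec : ∀ s t : Fin l, s < t → w (x t) < w (x s)) :
    l ≤ 2 * n - ((Finset.Icc (1 : ℤ) (n : ℤ)).filter fun i => 0 < w i).card :=
  decreasing_subsequence_bound_general n w hodd l x hx hmono hdec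
end

section
/- The shape of the insertion tableau produced by the Robinson–Schensted algorithm applied to a permutation δ ∈ S_n equals the shape of the insertion tableau applied to δ⁻¹. -/
/-- Row insertion of `x` into a row `r` (entries weakly increasing): returns the
new row and the bumped entry, if any. -/
def insRow : List ℕ → ℕ → List ℕ × Option ℕ
  | [], x => ([x], none)
  | y :: ys, x =>
    if y ≤ x then
      let p := insRow ys x
      (y :: p.1, p.2)
    else (x :: ys, some y)

/-- Robinson–Schensted insertion of an entry into a tableau (list of rows). -/
def insTab : List (List ℕ) → ℕ → List (List ℕ)
  | [], x => [[x]]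
  | r :: rs, x =>
    match insRow r x with
    | (r', none) => r' :: rs
    | (r', some y) => r' :: insTab rs y

/-- The insertion tableau of the Robinson–Schensted algorithm applied to a
sequence. -/
def RSinsertion (l : List ℕ) : List (List ℕ) := l.foldl insTab []

/-- The shape of a tableau: the list of its row lengths. -/
def shape (t : List (List ℕ)) : List ℕ := t.map List.length

/-!
Viennot's geometric construction. Draw the permutation as the points `(i, δ i)` and sort them into
shadow lines according to the longest increasing chain ending at each point. Inserting the values
from left to right, the first row of the insertion tableau lists, for each shadow line, the lowest
height it has reached so far, and the entries bumped out of the first row are the heights of the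
skeleton: the north-east corners of consecutive points on a shadow line, read from left to right.
So the first row has one entry per shadow line and the lower rows are the insertion tableau of the
skeleton. Reflection in the diagonal exchanges `δ` and `δ⁻¹` and preserves shadow lines and the
skeleton, so induction on the number of points proves the theorem.
-/

/-- Row insertion into the first row, accumulating the entries bumped out of it. -/
def insFirstRow (s : List ℕ × List ℕ) (x : ℕ) : List ℕ × List ℕ :=
  ((insRow s.1 x).1, s.2 ++ (insRow s.1 x).2.toList)

theorem insTab_cons (r : List ℕ) (rs : List (List ℕ)) (x : ℕ) :
    insTab (r :: rs) x = (insRow r x).1 :: (insRow r x).2.toList.foldl insTab rs := by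
  rcases h : insRow r x with ⟨r', _ | y⟩ <;> simp [insTab, h]

theorem foldl_insTab_cons (l : List ℕ) (r b : List ℕ) (rs : List (List ℕ)) :
    l.foldl insTab (r :: b.foldl insTab rs) =
      (l.foldl insFirstRow (r, b)).1 :: (l.foldl insFirstRow (r, b)).2.foldl insTab rs := by
  induction l generalizing r b with
  | nil => rfl
  | cons x l ih =>
    rw [List.foldl_cons, insTab_cons, ← List.foldl_append]
    exact ih _ _

theorem RSinsertion_eq_cons {l : List ℕ} (hl : l ≠ []) :
    RSinsertion l =
      (l.foldl insFirstRow ([], [])).1 :: RSinsertion (l.foldl insFirstRow ([], [])).2 := by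
  obtain ⟨x, l, rfl⟩ := List.exists_cons_of_ne_nil hl
  exact foldl_insTab_cons l [x] [] []

theorem insRow_eq_of_pairwise {row : List ℕ} (hrow : row.Pairwise (· ≤ ·)) (x : ℕ) :
    insRow row x =
      (row.take (row.countP (· ≤ x)) ++ x :: row.drop (row.countP (· ≤ x) + 1),
        row[row.countP (· ≤ x)]?) := by
  induction row with
  | nil => simp [insRow]
  | cons y r ih =>
    rw [List.pairwise_cons] at hrow
    by_cases hyx : y ≤ x
    · simp [insRow, hyx, ih hrow.2]
    · have hc : (y :: r).countP (· ≤ x) = 0 :=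
        List.countP_eq_zero.mpr fun z hz => by
          rcases List.mem_cons.mp hz with rfl | hz
          · simpa using hyx
          · have := hrow.1 z hz
            simp only [decide_eq_true_eq]
            omega
      simp [insRow, hyx, hc]

namespace List

theorem countP_range_lt (n k : ℕ) : (range n).countP (· < k) = min n k := by
  induction n with
  | zero => simp
  | succ n ih =>
    rw [range_succ, countP_append, ih, countP_singleton]
    split_ifs with h <;> simp only [decide_eq_true_eq] at h <;> omega

theorem map_range_max_eq_take_cons_drop {α : Type*} (f g : ℕ → α) {n c : ℕ}
    (hc : c ≤ n) (hfg : ∀ m, m ≠ c → g m = f m) :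
    (range (max n (c + 1))).map g =
      ((range n).map f).take c ++ g c :: ((range n).map f).drop (c + 1) := by
  apply ext_getElem (by simp; omega)
  intro i h₁ h₂
  simp only [getElem_map, getElem_range, getElem_append, getElem_take,
    length_take, length_map, length_range, getElem_cons, getElem_drop]
  split_ifs
  · exact hfg i (by omega)
  · congr 1; omega
  · rw [hfg i (by omega)]; congr 1; omega

end List

open Finset

namespace Viennot

def IsRookPlacement (P : Finset (ℕ × ℕ)) : Prop :=
  Set.InjOn Prod.fst (P : Set (ℕ × ℕ)) ∧ Set.InjOn Prod.snd (P : Set (ℕ × ℕ))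

/-- The index of the shadow line through `p` in Viennot's construction: the length of the longest
chain of points of `P` increasing in both coordinates and ending at `p`. -/
noncomputable def level (P : Finset (ℕ × ℕ)) (p : ℕ × ℕ) : ℕ :=
  1 + {q ∈ P | q.1 < p.1 ∧ q.2 < p.2}.attach.sup fun q => level P q.1
termination_by p.1
decreasing_by exact (mem_filter.mp q.2).2.1

variable {P : Finset (ℕ × ℕ)}

theorem level_eq (P : Finset (ℕ × ℕ)) (p : ℕ × ℕ) :
    level P p = 1 + {q ∈ P | q.1 < p.1 ∧ q.2 < p.2}.sup (level P) := by
  rw [level, sup_attach]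

theorem level_lt_level {p q : ℕ × ℕ} (hq : q ∈ P) (h₁ : q.1 < p.1) (h₂ : q.2 < p.2) :
    level P q < level P p := by
  have : level P q ≤ {q ∈ P | q.1 < p.1 ∧ q.2 < p.2}.sup (level P) :=
    le_sup (mem_filter.mpr ⟨hq, h₁, h₂⟩)
  rw [level_eq P p]; omega

theorem exists_level_add_one_eq {p : ℕ × ℕ} (h : 2 ≤ level P p) :
    ∃ q ∈ P, q.1 < p.1 ∧ q.2 < p.2 ∧ level P q + 1 = level P p := by
  rw [level_eq] at h
  obtain ⟨q, hq, hsup⟩ := exists_mem_eq_sup {q ∈ P | q.1 < p.1 ∧ q.2 < p.2}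
    (nonempty_iff_ne_empty.mpr fun he => by simp [he] at h) (level P)
  obtain ⟨hqP, h₁, h₂⟩ := mem_filter.mp hq
  exact ⟨q, hqP, h₁, h₂, by rw [level_eq P p, hsup]; omega⟩

theorem exists_lt_level_eq {p : ℕ × ℕ} {k : ℕ} (hk : 1 ≤ k) (hkp : k < level P p) :
    ∃ q ∈ P, q.1 < p.1 ∧ q.2 < p.2 ∧ level P q = k := by
  obtain ⟨n, hn⟩ := Nat.exists_eq_add_of_lt hkp
  induction n generalizing p with
  | zero =>
    obtain ⟨q, hq, h₁, h₂, hl⟩ := exists_level_add_one_eq (P := P) (p := p) (by omega)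
    exact ⟨q, hq, h₁, h₂, by omega⟩
  | succ n ih =>
    obtain ⟨q, hq, h₁, h₂, hl⟩ := exists_level_add_one_eq (P := P) (p := p) (by omega)
    obtain ⟨r, hr, h₁', h₂', hrl⟩ := ih (p := q) (by omega) (by omega)
    exact ⟨r, hr, h₁'.trans h₁, h₂'.trans h₂, hrl⟩

theorem exists_le_level_eq {p : ℕ × ℕ} (hp : p ∈ P) {k : ℕ} (hk : 1 ≤ k)
    (hkp : k ≤ level P p) :
    ∃ q ∈ P, q.1 ≤ p.1 ∧ q.2 ≤ p.2 ∧ level P q = k := by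
  rcases hkp.lt_or_eq with hkp | rfl
  · obtain ⟨q, hq, h₁, h₂, hl⟩ := exists_lt_level_eq hk hkp
    exact ⟨q, hq, h₁.le, h₂.le, hl⟩
  · exact ⟨p, hp, le_rfl, le_rfl, rfl⟩

theorem snd_lt_of_level_eq (hP : Set.InjOn Prod.snd (P : Set (ℕ × ℕ))) {p q : ℕ × ℕ}
    (hp : p ∈ P) (hq : q ∈ P) (hl : level P q = level P p) (h : q.1 < p.1) : p.2 < q.2 := by
  rcases lt_trichotomy p.2 q.2 with h₂ | h₂ | h₂
  · exact h₂
  · exact absurd (hP hp hq h₂) (by rintro rfl; omega)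
  · have := level_lt_level hq h h₂; omega

theorem level_image_swap (P : Finset (ℕ × ℕ)) (p : ℕ × ℕ) :
    level (P.image Prod.swap) p.swap = level P p := by
  rw [level_eq, level_eq, filter_image, sup_image]
  congr 1
  refine sup_congr (by ext; simp [and_comm]) fun q hq => ?_
  exact level_image_swap P q
termination_by p.1
decreasing_by exact (mem_filter.mp hq).2.1

noncomputable section

def before (P : Finset (ℕ × ℕ)) (t : ℕ) : Finset (ℕ × ℕ) := {q ∈ P | q.1 < t}

def line (P : Finset (ℕ × ℕ)) (m t : ℕ) : Finset (ℕ × ℕ) :=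
  {q ∈ before P t | level P q = m}

def height (P : Finset (ℕ × ℕ)) (t : ℕ) : ℕ := (before P t).sup (level P)

def minSnd (A : Finset (ℕ × ℕ)) : ℕ :=
  if h : A.Nonempty then (A.image Prod.snd).min' (h.image _) else 0

/-- Entry `m` is the height at which the `(m + 1)`-st shadow line, drawn for the points left of
`x = t`, crosses the line `x = t`. -/
def firstRow (P : Finset (ℕ × ℕ)) (t : ℕ) : List ℕ :=
  (List.range (height P t)).map fun m => minSnd (line P (m + 1) t)

end

@[simp] theorem mem_line {m t : ℕ} {q : ℕ × ℕ} :
    q ∈ line P m t ↔ q ∈ P ∧ q.1 < t ∧ level P q = m := by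
  simp [line, before, and_assoc]

theorem minSnd_le {A : Finset (ℕ × ℕ)} {a : ℕ × ℕ} (ha : a ∈ A) : minSnd A ≤ a.2 := by
  rw [minSnd, dif_pos ⟨a, ha⟩]
  exact min'_le _ _ (mem_image_of_mem _ ha)

theorem exists_snd_eq_minSnd {A : Finset (ℕ × ℕ)} (h : A.Nonempty) :
    ∃ a ∈ A, a.2 = minSnd A := by
  rw [minSnd, dif_pos h]
  simpa using min'_mem _ (h.image Prod.snd)

theorem minSnd_eq {A : Finset (ℕ × ℕ)} {a : ℕ × ℕ} (ha : a ∈ A)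
    (h : ∀ b ∈ A, a.2 ≤ b.2) : minSnd A = a.2 := by
  obtain ⟨b, hb, hb'⟩ := exists_snd_eq_minSnd ⟨a, ha⟩
  exact le_antisymm (minSnd_le ha) (hb' ▸ h b hb)

theorem level_le_height_add_one (P : Finset (ℕ × ℕ)) (p : ℕ × ℕ) :
    level P p ≤ height P p.1 + 1 := by
  have : {q ∈ P | q.1 < p.1 ∧ q.2 < p.2}.sup (level P) ≤ height P p.1 :=
    sup_mono fun q hq => by simp only [before, mem_filter] at hq ⊢; exact ⟨hq.1, hq.2.1⟩
  rw [level_eq]; omega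

theorem line_nonempty_iff {m t : ℕ} (hm : 1 ≤ m) :
    (line P m t).Nonempty ↔ m ≤ height P t := by
  constructor
  · rintro ⟨q, hq⟩
    rw [mem_line] at hq
    exact hq.2.2 ▸ le_sup (f := level P) (mem_filter.mpr ⟨hq.1, hq.2.1⟩)
  · intro h
    have hne : (before P t).Nonempty := nonempty_iff_ne_empty.mpr fun he => by
      rw [height, he, sup_empty, Nat.bot_eq_zero] at h; omega
    obtain ⟨p, hp, hsup⟩ := exists_mem_eq_sup (before P t) hne (level P)
    rw [before, mem_filter] at hp
    obtain ⟨q, hq, h₁, -, hl⟩ := exists_le_level_eq hp.1 hm (hsup ▸ h)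
    exact ⟨q, mem_line.mpr ⟨hq, by omega, hl⟩⟩

theorem minSnd_line_lt {i j t : ℕ} (hi : 1 ≤ i) (hij : i < j) (hj : (line P j t).Nonempty) :
    minSnd (line P i t) < minSnd (line P j t) := by
  obtain ⟨p, hp, hmin⟩ := exists_snd_eq_minSnd hj
  rw [mem_line] at hp
  obtain ⟨q, hq, h₁, h₂, hl⟩ := exists_lt_level_eq hi (hp.2.2 ▸ hij)
  have := minSnd_le ((mem_line (t := t)).mpr ⟨hq, by omega, hl⟩)
  omega

theorem length_firstRow (P : Finset (ℕ × ℕ)) (t : ℕ) :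
    (firstRow P t).length = height P t := by
  simp [firstRow]

theorem pairwise_firstRow (P : Finset (ℕ × ℕ)) (t : ℕ) :
    (firstRow P t).Pairwise (· ≤ ·) := by
  refine List.pairwise_map.mpr (List.pairwise_lt_range.imp_of_mem fun hi hj hij => ?_)
  rw [List.mem_range] at hj
  exact (minSnd_line_lt (by omega) (by omega) ((line_nonempty_iff (by omega)).mpr hj)).le

theorem countP_firstRow_le (hP : Set.InjOn Prod.snd (P : Set (ℕ × ℕ))) {p : ℕ × ℕ}
    (hp : p ∈ P) : (firstRow P p.1).countP (· ≤ p.2) + 1 = level P p := by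
  set L := {q ∈ P | q.1 < p.1 ∧ q.2 < p.2}.sup (level P)
  have hL : L ≤ height P p.1 :=
    sup_mono fun q hq => by simp only [before, mem_filter] at hq ⊢; exact ⟨hq.1, hq.2.1⟩
  have entry : ∀ m < height P p.1, minSnd (line P (m + 1) p.1) ≤ p.2 ↔ m < L := by
    intro m hm
    constructor
    · intro hle
      obtain ⟨r, hr, hr'⟩ := exists_snd_eq_minSnd (A := line P (m + 1) p.1)
        ((line_nonempty_iff (by omega)).mpr hm)
      rw [mem_line] at hr
      have hne : r.2 ≠ p.2 := fun h => by have := hP hr.1 hp h; subst this; omega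
      have : level P r ≤ L := le_sup (f := level P) (mem_filter.mpr ⟨hr.1, hr.2.1, by omega⟩)
      omega
    · intro hmL
      obtain ⟨q, hq, hsup⟩ := exists_mem_eq_sup {q ∈ P | q.1 < p.1 ∧ q.2 < p.2}
        (nonempty_iff_ne_empty.mpr fun he => by simp [L, he] at hmL) (level P)
      obtain ⟨hqP, h₁, h₂⟩ := mem_filter.mp hq
      obtain ⟨r, hr, hr₁, hr₂, hrl⟩ :=
        exists_le_level_eq hqP (k := m + 1) (by omega) (by omega)
      have := minSnd_le ((mem_line (t := p.1)).mpr ⟨hr, by omega, hrl⟩)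
      omega
  have hcount : (firstRow P p.1).countP (· ≤ p.2) = L := by
    rw [firstRow, List.countP_map, ← min_eq_right hL, ← List.countP_range_lt]
    refine List.countP_congr fun m hm => ?_
    simpa using entry m (List.mem_range.mp hm)
  rw [hcount, level_eq P p]; omega

theorem before_succ (hP : Set.InjOn Prod.fst (P : Set (ℕ × ℕ))) {p : ℕ × ℕ}
    (hp : p ∈ P) : before P (p.1 + 1) = insert p (before P p.1) := by
  ext q
  simp only [before, mem_filter, mem_insert]
  constructor
  · rintro ⟨hq, h⟩
    rcases Nat.lt_succ_iff_lt_or_eq.mp h with h | h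
    · exact Or.inr ⟨hq, h⟩
    · exact Or.inl (hP hq hp h)
  · rintro (rfl | ⟨hq, h⟩)
    · exact ⟨hp, by omega⟩
    · exact ⟨hq, by omega⟩

theorem before_succ_of_forall_ne {t : ℕ} (h : ∀ q ∈ P, q.1 ≠ t) :
    before P (t + 1) = before P t :=
  filter_congr fun q hq => by have := h q hq; omega

theorem firstRow_succ (hP : IsRookPlacement P) {p : ℕ × ℕ} (hp : p ∈ P) {c : ℕ}
    (hc : level P p = c + 1) :
    firstRow P (p.1 + 1) =
      (firstRow P p.1).take c ++ p.2 :: (firstRow P p.1).drop (c + 1) := by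
  have hheight : height P (p.1 + 1) = max (height P p.1) (c + 1) := by
    rw [height, before_succ hP.1 hp, sup_insert, ← hc, height, max_comm]
  have hline : ∀ m, line P m (p.1 + 1) =
      if level P p = m then insert p (line P m p.1) else line P m p.1 := by
    intro m; rw [line, before_succ hP.1 hp, filter_insert]; rfl
  have hnew : minSnd (line P (c + 1) (p.1 + 1)) = p.2 := by
    rw [hline, if_pos hc]
    refine minSnd_eq (mem_insert_self _ _) fun q hq => ?_
    rcases mem_insert.mp hq with rfl | hq
    · exact le_rfl
    · rw [mem_line] at hq
      exact (snd_lt_of_level_eq hP.2 hp hq.1 (by omega) hq.2.1).le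
  rw [firstRow, hheight, List.map_range_max_eq_take_cons_drop _ _ (by
    have := level_le_height_add_one P p; omega), hnew]
  · rfl
  · intro m hm
    rw [hline, if_neg (by omega)]

noncomputable section

def columnWord (Q : Finset (ℕ × ℕ)) (t : ℕ) : List ℕ :=
  ({q ∈ Q | q.1 = t}.image Prod.snd).sort

def readingWord (Q : Finset (ℕ × ℕ)) (t : ℕ) : List ℕ :=
  (List.range t).flatMap (columnWord Q)

/-- The north-east corners `(p.1, q.2)` of consecutive points `q`, `p` on a common shadow line;
`q` is the lowest point of the line of `p` to the left of `p`. -/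
def skeleton (P : Finset (ℕ × ℕ)) : Finset (ℕ × ℕ) :=
  {p ∈ P | (line P (level P p) p.1).Nonempty}.image fun p =>
    (p.1, minSnd (line P (level P p) p.1))

end

theorem readingWord_succ (Q : Finset (ℕ × ℕ)) (t : ℕ) :
    readingWord Q (t + 1) = readingWord Q t ++ columnWord Q t := by
  simp [readingWord, List.range_succ]

theorem columnWord_eq {Q : Finset (ℕ × ℕ)} {t : ℕ} {o : Option ℕ}
    (h : {q ∈ Q | q.1 = t}.image Prod.snd = o.toFinset) : columnWord Q t = o.toList := by
  cases o <;> simp [columnWord, h]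

theorem columnWord_of_mem (hP : Set.InjOn Prod.fst (P : Set (ℕ × ℕ))) {p : ℕ × ℕ}
    (hp : p ∈ P) : columnWord P p.1 = [p.2] := by
  refine columnWord_eq (o := some p.2) ?_
  ext x
  simp only [mem_image, mem_filter, Option.toFinset_some, mem_singleton]
  constructor
  · rintro ⟨q, ⟨hq, h⟩, rfl⟩
    rw [hP hq hp h]
  · rintro rfl
    exact ⟨p, ⟨hp, rfl⟩, rfl⟩

theorem columnWord_of_forall_ne {Q : Finset (ℕ × ℕ)} {t : ℕ} (h : ∀ q ∈ Q, q.1 ≠ t) :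
    columnWord Q t = [] :=
  columnWord_eq (o := none) (by simpa [filter_eq_empty_iff] using h)

theorem exists_of_mem_skeleton {a : ℕ × ℕ} (ha : a ∈ skeleton P) :
    ∃ p ∈ P, ∃ q ∈ P, a = (p.1, q.2) := by
  obtain ⟨p, hp, rfl⟩ := mem_image.mp ha
  obtain ⟨hpP, hne⟩ := mem_filter.mp hp
  obtain ⟨q, hq, hmin⟩ := exists_snd_eq_minSnd hne
  exact ⟨p, hpP, q, (mem_line.mp hq).1, by rw [hmin]⟩

theorem columnWord_skeleton (hP : Set.InjOn Prod.fst (P : Set (ℕ × ℕ))) {p : ℕ × ℕ}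
    (hp : p ∈ P) {c : ℕ} (hc : level P p = c + 1) :
    columnWord (skeleton P) p.1 = (firstRow P p.1)[c]?.toList := by
  refine columnWord_eq ?_
  ext x
  simp only [skeleton, mem_image, mem_filter, Option.mem_toFinset, Option.mem_def,
    List.getElem?_eq_some_iff, firstRow, List.length_map, List.length_range, List.getElem_map,
    List.getElem_range]
  constructor
  · rintro ⟨_, ⟨⟨q, ⟨hq, hne⟩, rfl⟩, hq₁⟩, rfl⟩
    obtain rfl := hP hq hp hq₁
    exact ⟨by have := (line_nonempty_iff (by omega)).mp hne; omega, by rw [hc]⟩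
  · rintro ⟨hlt, rfl⟩
    have hne : (line P (level P p) p.1).Nonempty := hc ▸ (line_nonempty_iff (by omega)).mpr hlt
    exact ⟨_, ⟨⟨p, ⟨hp, hne⟩, rfl⟩, rfl⟩, by rw [hc]⟩

/-- Inserting the point `p` of column `t` into the first row bumps the entry of the shadow line
of `p`, which is the height of the predecessor of `p` on that line: the skeleton corner in
column `t`. -/
theorem foldl_insFirstRow_readingWord (hP : IsRookPlacement P) (t : ℕ) :
    (readingWord P t).foldl insFirstRow ([], []) = (firstRow P t, readingWord (skeleton P) t) := by
  induction t with
  | zero => simp [readingWord, firstRow, height, before]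
  | succ t ih =>
    rw [readingWord_succ, List.foldl_append, ih, readingWord_succ]
    by_cases hex : ∃ p ∈ P, p.1 = t
    · obtain ⟨p, hp, rfl⟩ := hex
      obtain hc := (countP_firstRow_le hP.2 hp).symm
      rw [columnWord_of_mem hP.1 hp, List.foldl_cons, List.foldl_nil]
      simp only [insFirstRow]
      rw [insRow_eq_of_pairwise (pairwise_firstRow P p.1), ← firstRow_succ hP hp hc,
        columnWord_skeleton hP.1 hp hc]
    · push Not at hex
      have hskel : ∀ a ∈ skeleton P, a.1 ≠ t := fun a ha => by
        obtain ⟨p, hp, q, -, rfl⟩ := exists_of_mem_skeleton ha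
        exact hex p hp
      have hrow : firstRow P (t + 1) = firstRow P t := by
        simp only [firstRow, height, line, before_succ_of_forall_ne hex]
      rw [columnWord_of_forall_ne hex, columnWord_of_forall_ne hskel, List.append_nil,
        List.foldl_nil, hrow]

theorem shape_RSinsertion_readingWord (hP : IsRookPlacement P) (hne : P.Nonempty) {T : ℕ}
    (hT : ∀ p ∈ P, p.1 < T) :
    shape (RSinsertion (readingWord P T)) =
      P.sup (level P) :: shape (RSinsertion (readingWord (skeleton P) T)) := by
  have hword : readingWord P T ≠ [] := by
    obtain ⟨p, hp⟩ := hne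
    simp only [readingWord, ne_eq, List.flatMap_eq_nil_iff, List.mem_range, not_forall]
    exact ⟨p.1, hT p hp, by simp [columnWord_of_mem hP.1 hp]⟩
  have hbefore : before P T = P := filter_true_of_mem hT
  rw [RSinsertion_eq_cons hword, foldl_insFirstRow_readingWord hP, shape, List.map_cons,
    length_firstRow, height, hbefore]
  rfl

theorem IsRookPlacement.image_swap (hP : IsRookPlacement P) :
    IsRookPlacement (P.image Prod.swap) := by
  rw [IsRookPlacement, coe_image]
  exact ⟨hP.2.image_of_comp (f := Prod.swap), hP.1.image_of_comp (f := Prod.swap)⟩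

/-- Reflection in the diagonal maps shadow lines to shadow lines, reversing the order of their
points, so it maps corners to corners. -/
theorem image_swap_skeleton_subset (hP : IsRookPlacement P) :
    (skeleton P).image Prod.swap ⊆ skeleton (P.image Prod.swap) := by
  intro a ha
  obtain ⟨_, hb, rfl⟩ := mem_image.mp ha
  obtain ⟨p, hp, rfl⟩ := mem_image.mp hb
  obtain ⟨hpP, hne⟩ := mem_filter.mp hp
  obtain ⟨q, hq, hmin⟩ := exists_snd_eq_minSnd hne
  obtain ⟨hqP, hq₁, hql⟩ := mem_line.mp hq
  have hpL : p.swap ∈ line (P.image Prod.swap) (level (P.image Prod.swap) q.swap) q.2 :=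
    mem_line.mpr ⟨mem_image_of_mem _ hpP, snd_lt_of_level_eq hP.2 hpP hqP hql hq₁, by
      rw [level_image_swap, level_image_swap, hql]⟩
  have hminL : minSnd (line (P.image Prod.swap) (level (P.image Prod.swap) q.swap) q.2) = p.1 := by
    refine minSnd_eq hpL fun _ hr => ?_
    obtain ⟨hr_mem, hr₁, hrl⟩ := mem_line.mp hr
    obtain ⟨r, hrP, rfl⟩ := mem_image.mp hr_mem
    rw [level_image_swap, level_image_swap] at hrl
    by_contra! hrp
    simp only [Prod.fst_swap, Prod.snd_swap] at hr₁ hrp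
    have hrL : r ∈ line P (level P p) p.1 := mem_line.mpr ⟨hrP, hrp, hrl.trans hql⟩
    have := minSnd_le hrL
    omega
  refine mem_image.mpr ⟨q.swap, mem_filter.mpr ⟨mem_image_of_mem _ hqP, ⟨_, hpL⟩⟩, ?_⟩
  rw [Prod.fst_swap, hminL, ← hmin]
  rfl

theorem skeleton_image_swap (hP : IsRookPlacement P) :
    skeleton (P.image Prod.swap) = (skeleton P).image Prod.swap := by
  refine Subset.antisymm ?_ (image_swap_skeleton_subset hP)
  have := image_subset_image (f := Prod.swap) (image_swap_skeleton_subset hP.image_swap)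
  rwa [image_image, image_image, Prod.swap_swap_eq, image_id, image_id] at this

theorem injOn_fst_skeleton (hP : Set.InjOn Prod.fst (P : Set (ℕ × ℕ))) :
    Set.InjOn Prod.fst (skeleton P : Set (ℕ × ℕ)) := by
  rintro _ ha _ hb h
  obtain ⟨p, hp, rfl⟩ := mem_image.mp ha
  obtain ⟨q, hq, rfl⟩ := mem_image.mp hb
  rw [hP (mem_filter.mp hp).1 (mem_filter.mp hq).1 h]

theorem isRookPlacement_skeleton (hP : IsRookPlacement P) : IsRookPlacement (skeleton P) := by
  refine ⟨injOn_fst_skeleton hP.1, fun a ha b hb h => Prod.swap_inj.mp ?_⟩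
  have hswap := skeleton_image_swap hP
  exact injOn_fst_skeleton hP.image_swap.1 (hswap ▸ mem_image_of_mem _ ha : a.swap ∈ _)
    (hswap ▸ mem_image_of_mem _ hb : b.swap ∈ _) h

theorem card_skeleton_lt (hne : P.Nonempty) : (skeleton P).card < P.card := by
  obtain ⟨p, hp, hmin⟩ := exists_min_image P Prod.fst hne
  refine card_image_le.trans_lt (card_lt_card (filter_ssubset.mpr ⟨p, hp, ?_⟩))
  rintro ⟨q, hq⟩
  have := hmin q (mem_line.mp hq).1
  have := (mem_line.mp hq).2.1
  omega

theorem shape_RSinsertion_readingWord_image_swap {P : Finset (ℕ × ℕ)} (hP : IsRookPlacement P)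
    {T : ℕ} (hT : ∀ p ∈ P, p.1 < T ∧ p.2 < T) :
    shape (RSinsertion (readingWord (P.image Prod.swap) T)) =
      shape (RSinsertion (readingWord P T)) := by
  rcases P.eq_empty_or_nonempty with rfl | hne
  · rfl
  have hTskel : ∀ a ∈ skeleton P, a.1 < T ∧ a.2 < T := fun a ha => by
    obtain ⟨p, hp, q, hq, rfl⟩ := exists_of_mem_skeleton ha
    exact ⟨(hT p hp).1, (hT q hq).2⟩
  rw [shape_RSinsertion_readingWord hP.image_swap (hne.image _) fun a ha => by
      obtain ⟨p, hp, rfl⟩ := mem_image.mp ha; exact (hT p hp).2,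
    shape_RSinsertion_readingWord hP hne fun p hp => (hT p hp).1, sup_image, skeleton_image_swap hP,
    shape_RSinsertion_readingWord_image_swap (P := skeleton P) (isRookPlacement_skeleton hP) hTskel]
  congr 1
  exact sup_congr rfl fun p _ => level_image_swap P p
termination_by P.card
decreasing_by exact card_skeleton_lt hne

def graph {n : ℕ} (f : Fin n → ℕ) : Finset (ℕ × ℕ) :=
  univ.image fun i : Fin n => ((i : ℕ), f i)

theorem readingWord_graph {n : ℕ} (f : Fin n → ℕ) :
    readingWord (graph f) n = (List.finRange n).map f := by
  rw [readingWord, ← List.map_coe_finRange_eq_range, List.flatMap_map,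
    ← List.flatMap_pure_eq_map]
  refine List.flatMap_congr fun i _ => columnWord_eq (o := some (f i)) ?_
  ext x
  simp [graph, Fin.val_inj, eq_comm]

theorem isRookPlacement_graph {n : ℕ} {f : Fin n → ℕ} (hf : Function.Injective f) :
    IsRookPlacement (graph f) := by
  rw [IsRookPlacement, graph, coe_image, coe_univ]
  exact ⟨Set.InjOn.image_of_comp (g := Prod.fst) Fin.val_injective.injOn,
    Set.InjOn.image_of_comp (g := Prod.snd) hf.injOn⟩

theorem image_swap_graph {n : ℕ} (σ : Equiv.Perm (Fin n)) :
    (graph fun i => (σ i : ℕ)).image Prod.swap = graph fun i => (σ⁻¹ i : ℕ) := by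
  ext ⟨a, b⟩
  simp only [graph, image_image, mem_image, mem_univ, true_and, Function.comp, Prod.swap_prod_mk,
    Prod.mk.injEq]
  constructor
  · rintro ⟨i, rfl, rfl⟩
    exact ⟨σ i, rfl, by simp⟩
  · rintro ⟨j, rfl, rfl⟩
    exact ⟨σ⁻¹ j, by simp, rfl⟩

end Viennot

/-- The shape of the insertion tableau produced by the Robinson–Schensted
algorithm applied to a permutation `δ ∈ S_n` equals the shape of the insertion
tableau of `δ⁻¹`. -/
theorem RS_shape_inv (n : ℕ) (δ : Equiv.Perm (Fin n)) :
    shape (RSinsertion ((List.finRange n).map fun i => ((δ i : ℕ)))) =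
      shape (RSinsertion ((List.finRange n).map fun i => ((δ⁻¹ i : ℕ)))) := by
  rw [← Viennot.readingWord_graph, ← Viennot.readingWord_graph, ← Viennot.image_swap_graph]
  refine (Viennot.shape_RSinsertion_readingWord_image_swap
    (Viennot.isRookPlacement_graph (Fin.val_injective.comp δ.injective)) ?_).symm
  simp [Viennot.graph]
end

section
/- In the Weyl group W of type C_n or D_n realized as signed permutations, let α = ε_{−i} − ε_{−i+1} be a simple short root with reflection s_α, and let w ∈ W with v = w⁻¹. If v(i−1) > v(i+1) > v(i) > 0 (for −n < i < −1), then α ∈ τ(v) and there exists a simple root β = ε_{−i−1} − ε_{−i} with v·β a positive root but (v s_α)·β not a positive root; hence τ(v s_α) ⊄ τ(v). -/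
/-- `IsPosRoot a b` : the short root `ε_a − ε_b` (indices in `ℤ \ {0}`, with the
convention `ε_{−c} = −ε_c`) belongs to the fixed set of positive roots
`Δ⁺ = {−ε_i ± ε_j : i > j > 0}` of type `C`/`D`. -/
def IsPosRoot (a b : ℤ) : Prop :=
  (0 < a ∧ 0 < b ∧ a < b) ∨ (a < 0 ∧ 0 < b ∧ b < -a) ∨ (a < 0 ∧ b < 0 ∧ a < b)

theorem isPosRoot_neg_neg_iff {a b : ℤ} (ha : 0 < a) (hb : 0 < b) :
    IsPosRoot (-a) (-b) ↔ b < a := by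
  unfold IsPosRoot
  omega

theorem tau_not_subset_of_inequality_general
    (v : ℤ → ℤ)
    (hodd : ∀ j, v (-j) = - v j)
    (i : ℤ)
    (h1 : v (i + 1) < v (i - 1)) (h2 : v i < v (i + 1)) (h3 : 0 < v i) :
    ¬ IsPosRoot (v (-i)) (v (-(i - 1))) ∧
      IsPosRoot (v (-(i + 1))) (v (-i)) ∧
      ¬ IsPosRoot (v (-(i + 1))) (v (-(i - 1))) := by
  have hpos_succ : 0 < v (i + 1) := h3.trans h2
  have hpos_pred : 0 < v (i - 1) := hpos_succ.trans h1
  rw [hodd i, hodd (i - 1), hodd (i + 1), isPosRoot_neg_neg_iff h3 hpos_pred,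
    isPosRoot_neg_neg_iff hpos_succ h3, isPosRoot_neg_neg_iff hpos_succ hpos_pred]
  exact ⟨(h2.trans h1).asymm, h2, h1.asymm⟩

/-- In the Weyl group of type `C_n`/`D_n` realized as signed permutations, let
`α = ε_{−i} − ε_{−i+1}` with reflection `s_α`, and `v = w⁻¹`.  If
`v(i−1) > v(i+1) > v(i) > 0` (for `−n < i < −1`), then `α ∈ τ(v)` (i.e. `v·α`
is not positive), and for the simple root `β = ε_{−i−1} − ε_{−i}` one has
`v·β ∈ Δ⁺` but `(v s_α)·β ∉ Δ⁺`; hence `τ(v s_α) ⊄ τ(v)`.  (Here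
`s_α` swaps the indices `−i ↔ −(i−1)`, so `s_α·β = ε_{−(i+1)} − ε_{−(i−1)}`,
and `v` acts on roots by `v·(ε_a − ε_b) = ε_{v(a)} − ε_{v(b)}`.) -/
theorem tau_not_subset_of_inequality
    (n : ℕ) (v : ℤ → ℤ)
    (hbij : Set.BijOn v {j : ℤ | j ≠ 0 ∧ |j| ≤ (n : ℤ)} {j : ℤ | j ≠ 0 ∧ |j| ≤ (n : ℤ)})
    (hodd : ∀ j, v (-j) = - v j)
    (i : ℤ) (hi1 : -(n : ℤ) < i) (hi2 : i < -1)
    (h1 : v (i + 1) < v (i - 1)) (h2 : v i < v (i + 1)) (h3 : 0 < v i) :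
    ¬ IsPosRoot (v (-i)) (v (-(i - 1))) ∧
      IsPosRoot (v (-(i + 1))) (v (-i)) ∧
      ¬ IsPosRoot (v (-(i + 1))) (v (-(i - 1))) :=
  tau_not_subset_of_inequality_general v hodd i h1 h2 h3
end
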